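/- arXiv:1806.00338 — 5 statements merged into one kernel-verified Lean document; each statement's English description precedes it below -/
import Mathlib

section
/- Let α > 0 and let β be a real number with |β| < (1/4)·α^{3/2}. Then the cubic equation x·(α − x²) − β = 0 has three real solutions x₁, x₂, x₃ satisfying |x₁ − √α| ≤ 2|β|/α, |x₂ + √α| ≤ 2|β|/α, and |x₃| ≤ 2|β|/α. -/
/-!
Write `α = s²` with `s > 0` and `δ = 2|β|/s²`, so that `|β| = s²δ/2` and the hypothesis on `β`
says `δ < s/2`. At the endpoints of each of the intervals `[s - δ, s + δ]`, `[-δ, δ]` and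
`[-s - δ, -s + δ]` the odd part `x (s² - x²)` of the cubic has opposite signs and absolute value
at least `3s²δ/4 ≥ |β|`, so the intermediate value theorem gives a root in each; `δ < s/2` makes
the three intervals disjoint.
-/

open Set

section CubicRoots

variable {s δ β : ℝ}

theorem exists_cubic_root_mem_Icc_sub_add (hδ : 0 ≤ δ) (hδs : δ ≤ s / 2)
    (hβ : 2 * |β| ≤ δ * s ^ 2) :
    ∃ x ∈ Icc (s - δ) (s + δ), x * (s ^ 2 - x ^ 2) - β = 0 := by
  have hcont : Continuous fun x : ℝ => x * (s ^ 2 - x ^ 2) - β := by fun_prop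
  have hleft : 0 ≤ (s - δ) * (s ^ 2 - (s - δ) ^ 2) - β := by
    have hδ3 : 3 * s ^ 2 * δ / 4 ≤ (s - δ) * (2 * s - δ) * δ := by
      linarith [mul_nonneg hδ (mul_nonneg (by linarith : 0 ≤ s / 2 - δ)
        (by linarith : 0 ≤ 5 * s / 2 - δ))]
    linarith [le_abs_self β, mul_nonneg hδ (sq_nonneg s)]
  have hright : (s + δ) * (s ^ 2 - (s + δ) ^ 2) - β ≤ 0 := by
    have hδ3 : 2 * s ^ 2 * δ ≤ (s + δ) * (2 * s + δ) * δ := by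
      linarith [mul_nonneg hδ (mul_nonneg hδ (by linarith : 0 ≤ 3 * s + δ))]
    linarith [neg_le_abs β, mul_nonneg hδ (sq_nonneg s)]
  exact intermediate_value_Icc' (by linarith) hcont.continuousOn ⟨hright, hleft⟩

theorem exists_cubic_root_mem_Icc_neg_self (hδ : 0 ≤ δ) (hδs : δ ≤ s / 2)
    (hβ : 2 * |β| ≤ δ * s ^ 2) :
    ∃ x ∈ Icc (-δ) δ, x * (s ^ 2 - x ^ 2) - β = 0 := by
  have hcont : Continuous fun x : ℝ => x * (s ^ 2 - x ^ 2) - β := by fun_prop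
  have hδ3 : 3 * s ^ 2 * δ / 4 ≤ δ * (s ^ 2 - δ ^ 2) := by
    linarith [mul_nonneg hδ (mul_nonneg (by linarith : 0 ≤ s / 2 - δ)
      (by linarith : 0 ≤ s / 2 + δ))]
  have hleft : -δ * (s ^ 2 - (-δ) ^ 2) - β ≤ 0 := by
    linarith [neg_le_abs β, mul_nonneg hδ (sq_nonneg s)]
  have hright : 0 ≤ δ * (s ^ 2 - δ ^ 2) - β := by
    linarith [le_abs_self β, mul_nonneg hδ (sq_nonneg s)]
  exact intermediate_value_Icc (by linarith) hcont.continuousOn ⟨hleft, hright⟩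

/-- Reduces to the root near `s` for `-β`, since the cubic is odd up to the constant term. -/
theorem exists_cubic_root_mem_Icc_neg_sub_add (hδ : 0 ≤ δ) (hδs : δ ≤ s / 2)
    (hβ : 2 * |β| ≤ δ * s ^ 2) :
    ∃ x ∈ Icc (-s - δ) (-s + δ), x * (s ^ 2 - x ^ 2) - β = 0 := by
  obtain ⟨x, ⟨hxl, hxr⟩, hx⟩ :=
    exists_cubic_root_mem_Icc_sub_add (β := -β) hδ hδs (by rwa [abs_neg])
  exact ⟨-x, ⟨by linarith, by linarith⟩, by linear_combination -hx⟩

end CubicRoots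

/-- **Root estimation for the cubic gradient equation.**
Let `α > 0` and `|β| < (1/4)·α^(3/2)`. Then the cubic equation
`x·(α − x²) − β = 0` has three (distinct) real solutions `x₁, x₂, x₃` with
`|x₁ − √α| ≤ 2|β|/α`, `|x₂ + √α| ≤ 2|β|/α`, `|x₃| ≤ 2|β|/α`. -/
theorem cubic_root_estimation (α β : ℝ) (hα : 0 < α)
    (hβ : |β| < (1 / 4) * α ^ ((3 : ℝ) / 2)) :
    ∃ x₁ x₂ x₃ : ℝ,
      x₁ * (α - x₁ ^ 2) - β = 0 ∧
      x₂ * (α - x₂ ^ 2) - β = 0 ∧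
      x₃ * (α - x₃ ^ 2) - β = 0 ∧
      x₁ ≠ x₂ ∧ x₁ ≠ x₃ ∧ x₂ ≠ x₃ ∧
      |x₁ - Real.sqrt α| ≤ 2 * |β| / α ∧
      |x₂ + Real.sqrt α| ≤ 2 * |β| / α ∧
      |x₃| ≤ 2 * |β| / α := by
  obtain ⟨s, hs, rfl⟩ : ∃ s > 0, α = s ^ 2 :=
    ⟨√α, Real.sqrt_pos.2 hα, (Real.sq_sqrt hα.le).symm⟩
  rw [Real.rpow_div_two_eq_sqrt _ hα.le, Real.sqrt_sq hs.le, Real.rpow_ofNat] at hβ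
  rw [Real.sqrt_sq hs.le]
  set δ := 2 * |β| / s ^ 2
  have hδ : 0 ≤ δ := by positivity
  have hδs : δ < s / 2 := by rw [div_lt_iff₀ hα]; linarith
  have hβδ : 2 * |β| ≤ δ * s ^ 2 := (div_mul_cancel₀ _ hα.ne').ge
  obtain ⟨x₁, ⟨h₁l, h₁r⟩, hx₁⟩ := exists_cubic_root_mem_Icc_sub_add hδ hδs.le hβδ
  obtain ⟨x₂, ⟨h₂l, h₂r⟩, hx₂⟩ := exists_cubic_root_mem_Icc_neg_sub_add hδ hδs.le hβδ
  obtain ⟨x₃, ⟨h₃l, h₃r⟩, hx₃⟩ := exists_cubic_root_mem_Icc_neg_self hδ hδs.le hβδ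
  refine ⟨x₁, x₂, x₃, hx₁, hx₂, hx₃, ?_, ?_, ?_, abs_le.2 ⟨?_, ?_⟩, abs_le.2 ⟨?_, ?_⟩,
    abs_le.2 ⟨h₃l, h₃r⟩⟩ <;> linarith
end

section
/- Let q be a stationary point of φ on the unit sphere (i.e., A ζ°³ = ‖ζ‖₄⁴ q with ζ = Aᵀq) satisfying ‖ζ‖₄⁶ ≥ 4μ‖ζ‖₃³. Then for every index i, the i-th entry ζ_i lies within distance 2|β_i|/α_i of the three-point set {0, √α_i, −√α_i}; that is, min{|ζ_i|, |ζ_i − √α_i|, |ζ_i + √α_i|} ≤ 2|β_i|/α_i. -/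
open Finset Matrix

/-- Elementary fact: for `r > 0`, the least of `|x|, |x-r|, |x+r|` times `r²`
is at most twice the product of all three. -/
lemma key_min_trinary (x r : ℝ) (hr : 0 < r) :
    min |x| (min |x - r| |x + r|) * r ^ 2 ≤ 2 * (|x| * (|x - r| * |x + r|)) := by
  rcases le_total |x| (r / 2) with h | h
  · have h2 : |x - r| * |x + r| = r ^ 2 - x ^ 2 := by
      rw [← abs_mul]
      have he : (x - r) * (x + r) = -(r ^ 2 - x ^ 2) := by ring
      rw [he, abs_neg, abs_of_nonneg]
      nlinarith [abs_nonneg x, sq_abs x]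
    calc min |x| (min |x - r| |x + r|) * r ^ 2 ≤ |x| * r ^ 2 :=
          mul_le_mul_of_nonneg_right (min_le_left _ _) (by positivity)
      _ ≤ 2 * (|x| * (|x - r| * |x + r|)) := by
          rw [h2]
          have hx2 : x ^ 2 ≤ (r / 2) ^ 2 := by nlinarith [sq_abs x, abs_nonneg x]
          nlinarith [mul_le_mul_of_nonneg_left
            (show r ^ 2 ≤ 2 * (r ^ 2 - x ^ 2) by nlinarith) (abs_nonneg x)]
  · rcases le_total 0 x with hx | hx
    · have hxr : r / 2 ≤ x := by rwa [abs_of_nonneg hx] at h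
      have hm : min |x| (min |x - r| |x + r|) ≤ |x - r| :=
        le_trans (min_le_right _ _) (min_le_left _ _)
      calc min |x| (min |x - r| |x + r|) * r ^ 2 ≤ |x - r| * r ^ 2 :=
            mul_le_mul_of_nonneg_right hm (by positivity)
        _ ≤ 2 * (|x| * (|x - r| * |x + r|)) := by
            rw [abs_of_nonneg hx, abs_of_nonneg (by linarith : (0:ℝ) ≤ x + r)]
            nlinarith [mul_le_mul_of_nonneg_left
              (show r ^ 2 ≤ 2 * (x * (x + r)) by nlinarith) (abs_nonneg (x - r))]
    · have hxr : x ≤ -(r / 2) := by rw [abs_of_nonpos hx] at h; linarith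
      have hm : min |x| (min |x - r| |x + r|) ≤ |x + r| :=
        le_trans (min_le_right _ _) (min_le_right _ _)
      calc min |x| (min |x - r| |x + r|) * r ^ 2 ≤ |x + r| * r ^ 2 :=
            mul_le_mul_of_nonneg_right hm (by positivity)
        _ ≤ 2 * (|x| * (|x - r| * |x + r|)) := by
            rw [abs_of_nonpos hx, abs_of_nonpos (by linarith : x - r ≤ 0)]
            nlinarith [mul_le_mul_of_nonneg_left
              (show r ^ 2 ≤ 2 * (-x * -(x - r)) by nlinarith) (abs_nonneg (x + r))]

/-- **Entries of `ζ` at a stationary point are nearly trinary.**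
Let `A ∈ ℝ^{k×n}` have orthonormal rows and nonzero columns `a_1, …, a_n`, with
coherence `μ = max_{i≠j} |⟨a_i, a_j⟩|`.  Let `q` be a unit vector which is a stationary
point of `φ(q) = −(1/4)‖Aᵀq‖₄⁴` on the sphere, i.e. `A ζ°³ = ‖ζ‖₄⁴ q` with `ζ = Aᵀ q`,
and assume `‖ζ‖₄⁶ ≥ 4 μ ‖ζ‖₃³`.  Then for every index `i`, the entry `ζ_i` lies within
distance `2|β_i|/α_i` of the set `{0, √α_i, −√α_i}`, where
`α_i = ‖ζ‖₄⁴ / ‖a_i‖₂²` and `β_i = (∑_{j≠i} ⟨a_i, a_j⟩ ζ_j³) / ‖a_i‖₂²`. -/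
theorem stationary_entries_nearly_trinary
    {k n : ℕ} (A : Matrix (Fin k) (Fin n) ℝ) (q : Fin k → ℝ) (μ : ℝ)
    (horth : A * Aᵀ = 1)
    (hcols : ∀ i : Fin n, (fun r => A r i) ≠ 0)
    (hμ : IsGreatest {x : ℝ | ∃ i j : Fin n, i ≠ j ∧
            x = |∑ r, A r i * A r j|} μ)
    (hq_unit : ∑ r, (q r) ^ 2 = 1)
    (hstat : A.mulVec (fun i => ((Aᵀ.mulVec q) i) ^ 3)
              = (∑ i, ((Aᵀ.mulVec q) i) ^ 4) • q)
    (hregion : (∑ i, ((Aᵀ.mulVec q) i) ^ 4) ^ ((3 : ℝ) / 2)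
              ≥ 4 * μ * ∑ i, |(Aᵀ.mulVec q) i| ^ 3) :
    ∀ i : Fin n,
      min |( Aᵀ.mulVec q) i|
        (min |(Aᵀ.mulVec q) i -
                Real.sqrt ((∑ l, ((Aᵀ.mulVec q) l) ^ 4) / (∑ r, (A r i) ^ 2))|
             |(Aᵀ.mulVec q) i +
                Real.sqrt ((∑ l, ((Aᵀ.mulVec q) l) ^ 4) / (∑ r, (A r i) ^ 2))|)
      ≤ 2 * |(∑ j ∈ univ \ {i}, (∑ r, A r i * A r j) * ((Aᵀ.mulVec q) j) ^ 3)
              / (∑ r, (A r i) ^ 2)|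
        / ((∑ l, ((Aᵀ.mulVec q) l) ^ 4) / (∑ r, (A r i) ^ 2)) := by
  intro i
  set ζ : Fin n → ℝ := Aᵀ.mulVec q with hζ
  set s : ℝ := ∑ r, (A r i) ^ 2 with hs
  set S4 : ℝ := ∑ l, ζ l ^ 4 with hS4
  set B : ℝ := ∑ j ∈ univ \ {i}, (∑ r, A r i * A r j) * ζ j ^ 3 with hB
  -- positivity of s
  have hs_pos : 0 < s := by
    obtain ⟨r, hr⟩ := Function.ne_iff.mp (hcols i)
    simp only [Pi.zero_apply] at hr
    exact Finset.sum_pos' (fun r _ => sq_nonneg _)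
      ⟨r, Finset.mem_univ r, lt_of_le_of_ne (sq_nonneg _) (Ne.symm (pow_ne_zero 2 hr))⟩
  -- ‖ζ‖₂² = 1
  have hS2 : ∑ j, ζ j ^ 2 = 1 := by
    have h1 : ζ ⬝ᵥ ζ = 1 := by
      calc ζ ⬝ᵥ ζ = (Aᵀ.mulVec q) ⬝ᵥ (Aᵀ.mulVec q) := by rw [hζ]
        _ = (Aᵀ.vecMul (Aᵀ.mulVec q)) ⬝ᵥ q := by rw [Matrix.dotProduct_mulVec]
        _ = (A.mulVec (Aᵀ.mulVec q)) ⬝ᵥ q := by rw [Matrix.vecMul_transpose]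
        _ = ((A * Aᵀ).mulVec q) ⬝ᵥ q := by rw [Matrix.mulVec_mulVec]
        _ = q ⬝ᵥ q := by rw [horth, Matrix.one_mulVec]
        _ = 1 := by
            rw [← hq_unit]; exact Finset.sum_congr rfl fun r _ => (sq (q r)).symm
    rw [← h1]
    exact Finset.sum_congr rfl fun j _ => (sq (ζ j))
  -- S4 > 0
  have hζne : ∃ j, ζ j ≠ 0 := by
    by_contra h
    push_neg at h
    simp [h] at hS2
  have hS4_pos : 0 < S4 := by
    obtain ⟨j, hj⟩ := hζne
    have h4 : ζ j ^ 4 ≤ S4 :=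
      Finset.single_le_sum (f := fun l => ζ l ^ 4) (fun l _ => by positivity)
        (Finset.mem_univ j)
    have : (0 : ℝ) < ζ j ^ 4 := by positivity
    linarith
  -- ζ i as a sum
  have hζi : ζ i = ∑ r, A r i * q r := by
    simp [hζ, Matrix.mulVec, dotProduct, Matrix.transpose_apply]
  -- the cubic identity from stationarity
  have hswap : ∑ r, A r i * (A.mulVec (fun j => ζ j ^ 3) r)
      = ∑ j, (∑ r, A r i * A r j) * ζ j ^ 3 := by
    simp only [Matrix.mulVec, dotProduct, Finset.mul_sum, Finset.sum_mul]
    rw [Finset.sum_comm]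
    exact Finset.sum_congr rfl fun j _ => Finset.sum_congr rfl fun r _ => by ring
  have hid : B + s * ζ i ^ 3 = S4 * ζ i := by
    calc B + s * ζ i ^ 3
        = ∑ j, (∑ r, A r i * A r j) * ζ j ^ 3 := by
          rw [Finset.sum_eq_sum_sdiff_singleton_add (Finset.mem_univ i)
            (fun j => (∑ r, A r i * A r j) * ζ j ^ 3)]
          have hss : ∑ r, A r i * A r i = s := by
            rw [hs]
            exact Finset.sum_congr rfl fun r _ => (pow_two (A r i)).symm
          rw [hss, ← hB]
      _ = ∑ r, A r i * (A.mulVec (fun j => ζ j ^ 3) r) := hswap.symm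
      _ = ∑ r, A r i * ((S4 • q) r) := by rw [hstat]
      _ = S4 * ζ i := by
          rw [hζi, Finset.mul_sum]
          exact Finset.sum_congr rfl fun r _ => by
            simp [smul_eq_mul]; ring
  -- set up α, β, rr
  have hα : 0 < S4 / s := div_pos hS4_pos hs_pos
  set α : ℝ := S4 / s with hαdef
  set β : ℝ := B / s with hβdef
  set rr : ℝ := Real.sqrt α with hrrdef
  have hrr : 0 < rr := Real.sqrt_pos.mpr hα
  have hrr2 : rr ^ 2 = α := Real.sq_sqrt hα.le
  have hpoly : ζ i ^ 3 - α * ζ i = -β := by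
    rw [hαdef, hβdef]
    field_simp
    linear_combination hid
  have hcubic : ζ i * ((ζ i - rr) * (ζ i + rr)) = -β := by
    linear_combination hpoly - ζ i * hrr2
  have habs : |ζ i| * (|ζ i - rr| * |ζ i + rr|) = |β| := by
    rw [← abs_mul, ← abs_mul, hcubic, abs_neg]
  have hkey := key_min_trinary (ζ i) rr hrr
  rw [habs, hrr2] at hkey
  exact (le_div_iff₀ hα).mpr hkey
end

section
/- Let q be a stationary point of φ on the unit sphere (i.e., A ζ°³ = ‖ζ‖₄⁴ q with ζ = Aᵀq) satisfying ‖ζ‖₄⁶ ≥ C⋆ μ κ² ‖ζ‖₃³ with C⋆ ≥ 10 and κ ≥ 1. Then ζ has at least one entry of nontrivial magnitude: ‖ζ‖_∞ ≥ 2μ‖ζ‖₃³/‖ζ‖₄⁴. -/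
open Finset Matrix

/-- **Nontrivial preference of a stationary point.**
Let `A ∈ ℝ^{k×n}` have orthonormal rows and nonzero columns `a_1, …, a_n`, with
coherence `μ = max_{i≠j}|⟨a_i,a_j⟩|`, and let `κ ≥ 1`, `C⋆ ≥ 10`.  If `q` is a unit
vector that is a stationary point of `φ(q) = −(1/4)‖Aᵀq‖₄⁴` on the sphere
(`A ζ°³ = ‖ζ‖₄⁴ q`, `ζ = Aᵀq`) with `‖ζ‖₄⁶ ≥ C⋆ μ κ² ‖ζ‖₃³`, then
`‖ζ‖_∞ ≥ 2 μ ‖ζ‖₃³ / ‖ζ‖₄⁴`. -/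
theorem stationary_point_nontrivial_entry
    {k n : ℕ} (hn : 2 ≤ n)
    (A : Matrix (Fin k) (Fin n) ℝ) (q : Fin k → ℝ) (μ κ Cstar : ℝ)
    (horth : A * Aᵀ = 1)
    (hcols : ∀ i : Fin n, (fun r => A r i) ≠ 0)
    (hμ : IsGreatest {x : ℝ | ∃ i j : Fin n, i ≠ j ∧
            x = |∑ r, A r i * A r j|} μ)
    (hκ : 1 ≤ κ) (hC : 10 ≤ Cstar)
    (hq_unit : ∑ r, (q r) ^ 2 = 1)
    (hstat : A.mulVec (fun i => ((Aᵀ.mulVec q) i) ^ 3)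
              = (∑ i, ((Aᵀ.mulVec q) i) ^ 4) • q)
    (hregion : (∑ i, ((Aᵀ.mulVec q) i) ^ 4) ^ ((3 : ℝ) / 2)
              ≥ Cstar * μ * κ ^ 2 * ∑ i, |(Aᵀ.mulVec q) i| ^ 3) :
    univ.sup' (univ_nonempty_iff.mpr ⟨⟨0, by omega⟩⟩) (fun i => |(Aᵀ.mulVec q) i|)
      ≥ 2 * μ * (∑ i, |(Aᵀ.mulVec q) i| ^ 3) / (∑ i, ((Aᵀ.mulVec q) i) ^ 4) := by
  set ζ : Fin n → ℝ := Aᵀ.mulVec q with hζ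
  set S4 : ℝ := ∑ i, ζ i ^ 4 with hS4
  set S3 : ℝ := ∑ i, |ζ i| ^ 3 with hS3
  set M : ℝ := univ.sup' (univ_nonempty_iff.mpr ⟨⟨0, by omega⟩⟩)
      (fun i => |ζ i|) with hM
  -- ℓ² norm of ζ is 1
  have key : ∀ r s : Fin k, ∑ i, A r i * A s i = if r = s then 1 else 0 := by
    intro r s
    have h := congrFun (congrFun horth r) s
    simpa [Matrix.mul_apply, Matrix.one_apply] using h
  have hζ2 : ∑ i, ζ i ^ 2 = 1 := by
    calc ∑ i, ζ i ^ 2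
        = ∑ i, ∑ r, ∑ s, (A r i * q r) * (A s i * q s) := by
          refine Finset.sum_congr rfl fun i _ => ?_
          rw [hζ]
          simp only [Matrix.mulVec, Matrix.transpose_apply, dotProduct]
          rw [sq, Finset.sum_mul_sum]
      _ = ∑ r, ∑ i, ∑ s, (A r i * q r) * (A s i * q s) := Finset.sum_comm
      _ = ∑ r, ∑ s, ∑ i, (A r i * q r) * (A s i * q s) :=
          Finset.sum_congr rfl fun r _ => Finset.sum_comm
      _ = ∑ r, ∑ s, (q r * q s) * ∑ i, A r i * A s i := by
          refine Finset.sum_congr rfl fun r _ => Finset.sum_congr rfl fun s _ => ?_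
          rw [Finset.mul_sum]
          exact Finset.sum_congr rfl fun i _ => by ring
      _ = ∑ r, q r * q r := by
          refine Finset.sum_congr rfl fun r _ => ?_
          simp [key, mul_ite]
      _ = 1 := by simpa [sq] using hq_unit
  -- S4 is positive
  have hS4nn : 0 ≤ S4 := Finset.sum_nonneg fun i _ => by positivity
  have hS4pos : 0 < S4 := by
    rcases hS4nn.lt_or_eq with h | h
    · exact h
    · exfalso
      have hall := (Finset.sum_eq_zero_iff_of_nonneg
        (fun i (_ : i ∈ univ) => by positivity : ∀ i ∈ univ, (0:ℝ) ≤ ζ i ^ 4)).mp h.symm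
      have h10 : (1:ℝ) = 0 := by
        rw [← hζ2]
        refine Finset.sum_eq_zero fun i _ => ?_
        have h4 := hall i (mem_univ i)
        have hz : ζ i = 0 := by
          by_contra hne
          have hpos : 0 < ζ i ^ 4 := by positivity
          linarith
        simp [hz]
      norm_num at h10
  -- M bounds
  have hM0 : 0 ≤ M := le_trans (abs_nonneg (ζ ⟨0, by omega⟩))
    (Finset.le_sup' (fun i => |ζ i|) (mem_univ ⟨0, by omega⟩))
  have hMsq : S4 ≤ M ^ 2 := by
    have : S4 ≤ ∑ i, M ^ 2 * ζ i ^ 2 := by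
      refine Finset.sum_le_sum fun i _ => ?_
      have hle : |ζ i| ≤ M := Finset.le_sup' (fun i => |ζ i|) (mem_univ i)
      have habs : ζ i ^ 2 = |ζ i| ^ 2 := (sq_abs _).symm
      nlinarith [mul_le_mul hle hle (abs_nonneg (ζ i)) hM0, sq_nonneg (ζ i)]
    calc S4 ≤ ∑ i, M ^ 2 * ζ i ^ 2 := this
      _ = M ^ 2 * ∑ i, ζ i ^ 2 := by rw [Finset.mul_sum]
      _ = M ^ 2 := by rw [hζ2, mul_one]
  have hsqrtM : Real.sqrt S4 ≤ M := by
    calc Real.sqrt S4 ≤ Real.sqrt (M ^ 2) := Real.sqrt_le_sqrt hMsq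
      _ = M := Real.sqrt_sq hM0
  -- nonnegativity of μ and S3
  obtain ⟨⟨i0, j0, hij0, hμeq⟩, -⟩ := hμ
  have hμ0 : 0 ≤ μ := hμeq ▸ abs_nonneg _
  have hS30 : 0 ≤ S3 := Finset.sum_nonneg fun i _ => by positivity
  -- rpow identity
  have h32 : S4 ^ ((3:ℝ)/2) = Real.sqrt S4 * S4 := by
    rw [show (3:ℝ)/2 = 1/2 + 1 by norm_num, Real.rpow_add hS4pos, Real.rpow_one,
      Real.sqrt_eq_rpow]
  -- conclude
  rw [ge_iff_le, div_le_iff₀ hS4pos]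
  have hCK : (2:ℝ) ≤ Cstar * κ ^ 2 := by nlinarith
  calc 2 * μ * S3 ≤ Cstar * μ * κ ^ 2 * S3 := by
        nlinarith [mul_nonneg hμ0 hS30]
    _ ≤ S4 ^ ((3:ℝ)/2) := hregion
    _ = Real.sqrt S4 * S4 := h32
    _ ≤ M * S4 := mul_le_mul_of_nonneg_right hsqrtM hS4pos.le
end

section
/- Let q be a stationary point of φ on the unit sphere (i.e., A ζ°³ = ‖ζ‖₄⁴ q with ζ = Aᵀq) satisfying ‖ζ‖₄⁶ ≥ C⋆ μ κ² ‖ζ‖₃³ with C⋆ ≥ 10 and κ ≥ 1, and suppose there is exactly one index l with |ζ_l| ≥ 2μ‖ζ‖₃³/‖ζ‖₄⁴. Then (i) |⟨q, a_l⟩|/‖a_l‖₂ ≥ 1 − 2c⋆κ^{−2}, and (ii) for every unit vector v with ⟨v, q⟩ = 0 one has vᵀ Hess φ(q) v ≥ (1 − 6c⋆ − 36c⋆² − 24c⋆³)‖ζ‖₄⁴ > 0, where c⋆ = 1/C⋆. -/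
open Finset Matrix

/-!
Since `A` has orthonormal rows, `ζ = Aᵀq` is a unit vector. Every `ζ_j` with `j ≠ l` lies below
the threshold `2μ‖ζ‖₃³/‖ζ‖₄⁴`, and with `‖ζ‖₄⁶ ≥ C⋆μκ²‖ζ‖₃³` this gives
`‖ζ‖₄⁴ - ζ_l⁴ ≤ 4u²‖ζ‖₄⁴` for `u = c⋆κ⁻²`: almost all of the fourth moment sits on the spike.
The `l`-th entry of `AᵀA ζ°³ = ‖ζ‖₄⁴ ζ` reads `‖a_l‖² ζ_l³ + R = ‖ζ‖₄⁴ ζ_l` with `|R| ≤ μ‖ζ‖₃³`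
by coherence, so `|‖a_l‖² ζ_l² - ‖ζ‖₄⁴| ≤ 2u‖ζ‖₄⁴`, which yields (i).
For `v ⊥ q` the Hessian form is `‖ζ‖₄⁴ - 3 Σᵢ ζᵢ² (Aᵀv)ᵢ²`; the terms `i ≠ l` contribute at most
`4u²‖ζ‖₄⁴` as before, and Bessel's inequality `(Aᵀv)_l² ≤ ‖a_l‖² - ζ_l²` bounds the spike term.
-/

section MatrixLemmas

variable {m n : Type*} [Fintype m] [Fintype n]

lemma sum_sq_transpose_mulVec_of_mul_transpose_eq_one [DecidableEq m] {A : Matrix m n ℝ}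
    (hA : A * Aᵀ = 1) (x : m → ℝ) : ∑ i, (Aᵀ *ᵥ x) i ^ 2 = ∑ r, x r ^ 2 := by
  have h : (Aᵀ *ᵥ x) ⬝ᵥ (Aᵀ *ᵥ x) = x ⬝ᵥ x := by
    rw [dotProduct_mulVec, vecMul_transpose, mulVec_mulVec, hA, one_mulVec]
  simpa only [dotProduct, sq] using h

lemma exists_transpose_mulVec_mulVec_apply_eq [DecidableEq n] {A : Matrix m n ℝ} {μ : ℝ}
    (hμ : 0 ≤ μ) (hcoh : ∀ i j, i ≠ j → |∑ r, A r i * A r j| ≤ μ) (x : n → ℝ) (l : n) :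
    ∃ R, |R| ≤ μ * ∑ i, |x i| ∧ (Aᵀ *ᵥ (A *ᵥ x)) l = (∑ r, A r l ^ 2) * x l + R := by
  refine ⟨∑ i ∈ univ.erase l, (∑ r, A r l * A r i) * x i, ?_, ?_⟩
  · calc |∑ i ∈ univ.erase l, (∑ r, A r l * A r i) * x i|
        ≤ ∑ i ∈ univ.erase l, μ * |x i| := by
          refine (abs_sum_le_sum_abs _ _).trans (sum_le_sum fun i hi => ?_)
          rw [abs_mul]
          exact mul_le_mul_of_nonneg_right (hcoh l i (ne_of_mem_erase hi).symm) (abs_nonneg _)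
      _ ≤ μ * ∑ i, |x i| := by
          rw [mul_sum]
          exact sum_le_sum_of_subset_of_nonneg (erase_subset _ _) fun i _ _ => by positivity
  · have h : (Aᵀ *ᵥ (A *ᵥ x)) l = ∑ i, (∑ r, A r l * A r i) * x i := by
      rw [mulVec_mulVec]
      simp only [mulVec, dotProduct, mul_apply, transpose_apply]
    rw [h, ← add_sum_erase _ _ (mem_univ l)]
    simp only [sq]

lemma dotProduct_mulVec_conj_one_sub_vecMulVec [DecidableEq m] {R : Type*} [CommRing R]
    {q v : m → R} (hv : v ⬝ᵥ q = 0) (B : Matrix m m R) :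
    v ⬝ᵥ ((1 - vecMulVec q q) * B * (1 - vecMulVec q q)) *ᵥ v = v ⬝ᵥ B *ᵥ v := by
  have hright : (1 - vecMulVec q q) *ᵥ v = v := by
    rw [sub_mulVec, one_mulVec, vecMulVec_mulVec, dotProduct_comm, hv]; simp
  have hleft : v ᵥ* (1 - vecMulVec q q) = v := by
    rw [vecMul_sub, vecMul_one, vecMul_vecMulVec, hv, zero_smul, sub_zero]
  rw [← mulVec_mulVec, hright, ← mulVec_mulVec, dotProduct_mulVec, hleft]

lemma dotProduct_mulVec_mul_diagonal_mul_transpose [DecidableEq n] (A : Matrix m n ℝ)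
    (d : n → ℝ) (v : m → ℝ) :
    v ⬝ᵥ (A * diagonal d * Aᵀ) *ᵥ v = ∑ i, d i * (Aᵀ *ᵥ v) i ^ 2 := by
  rw [← mulVec_mulVec, dotProduct_mulVec, ← vecMul_vecMul, ← mulVec_transpose A v]
  simp only [vecMul_diagonal, dotProduct]
  exact sum_congr rfl fun i _ => by ring

lemma hessian_quadratic_form [DecidableEq m] [DecidableEq n] (A : Matrix m n ℝ) (d : n → ℝ) (S : ℝ)
    {q v : m → ℝ} (hv : v ⬝ᵥ q = 0) :
    v ⬝ᵥ (-((1 - vecMulVec q q) * ((3 : ℝ) • (A * diagonal d * Aᵀ) - S • 1) *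
        (1 - vecMulVec q q))) *ᵥ v = S * ∑ r, v r ^ 2 - 3 * ∑ i, d i * (Aᵀ *ᵥ v) i ^ 2 := by
  rw [neg_mulVec, dotProduct_neg, dotProduct_mulVec_conj_one_sub_vecMulVec hv, sub_mulVec,
    dotProduct_sub, smul_mulVec, smul_mulVec, one_mulVec, dotProduct_smul, dotProduct_smul,
    dotProduct_mulVec_mul_diagonal_mul_transpose]
  simp only [dotProduct, smul_eq_mul, sq]
  ring

end MatrixLemmas

lemma sq_sum_mul_add_sq_sum_mul_le {m : Type*} [Fintype m] {a q v : m → ℝ}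
    (hq : ∑ r, q r ^ 2 = 1) (hv : ∑ r, v r ^ 2 = 1) (hvq : ∑ r, v r * q r = 0) :
    (∑ r, a r * v r) ^ 2 + (∑ r, a r * q r) ^ 2 ≤ ∑ r, a r ^ 2 := by
  set s := ∑ r, a r * q r
  set t := ∑ r, a r * v r
  have hexpand : ∀ r, (a r - s * q r - t * v r) ^ 2 = a r ^ 2 - 2 * s * (a r * q r)
      - 2 * t * (a r * v r) + s ^ 2 * q r ^ 2 + t ^ 2 * v r ^ 2 + 2 * s * t * (v r * q r) :=
    fun r => by ring
  have h := sum_nonneg fun r (_ : r ∈ univ) => sq_nonneg (a r - s * q r - t * v r)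
  simp only [hexpand, sum_add_distrib, sum_sub_distrib, ← mul_sum, hq, hv, hvq] at h
  linarith

lemma sum_pow_four_pos_of_sum_sq_eq_one {ι : Type*} [Fintype ι] {ζ : ι → ℝ}
    (hζ : ∑ i, ζ i ^ 2 = 1) : 0 < ∑ i, ζ i ^ 4 := by
  obtain ⟨i, hi⟩ : ∃ i, ζ i ≠ 0 := by
    by_contra! h
    simp [h] at hζ
  exact sum_pos' (fun i _ => by positivity) ⟨i, mem_univ i, by positivity⟩

lemma sum_sq_mul_le_of_forall_ne {ι : Type*} [Fintype ι] [DecidableEq ι] {ζ w : ι → ℝ} {l : ι}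
    {S M u : ℝ} (hS : 0 < S) (hM : M ^ 2 ≤ u ^ 2 * S ^ 3)
    (hsmall : ∀ j, j ≠ l → S * |ζ j| ≤ 2 * M) (hw0 : ∀ j, 0 ≤ w j) (hw1 : ∑ j, w j ≤ 1) :
    ∑ j, ζ j ^ 2 * w j ≤ ζ l ^ 2 * w l + 4 * u ^ 2 * S := by
  have hterm : ∀ j ∈ univ.erase l, ζ j ^ 2 * w j ≤ 4 * u ^ 2 * S * w j := by
    intro j hj
    have hsq : S ^ 2 * ζ j ^ 2 ≤ S ^ 2 * (4 * u ^ 2 * S) := by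
      have := pow_le_pow_left₀ (by positivity) (hsmall j (ne_of_mem_erase hj)) 2
      rw [mul_pow, sq_abs] at this
      linarith
    exact mul_le_mul_of_nonneg_right (le_of_mul_le_mul_left hsq (by positivity)) (hw0 j)
  have hw : ∑ j ∈ univ.erase l, w j ≤ 1 :=
    (sum_le_sum_of_subset_of_nonneg (erase_subset _ _) fun j _ _ => hw0 j).trans hw1
  rw [← add_sum_erase _ _ (mem_univ l)]
  gcongr
  calc ∑ j ∈ univ.erase l, ζ j ^ 2 * w j ≤ ∑ j ∈ univ.erase l, 4 * u ^ 2 * S * w j :=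
        sum_le_sum hterm
    _ ≤ 4 * u ^ 2 * S := by
        rw [← mul_sum]
        exact mul_le_of_le_one_right (by positivity) hw

lemma mul_sum_pow_four_le_pow_four_of_forall_ne {ι : Type*} [Fintype ι] [DecidableEq ι] {ζ : ι → ℝ} {l : ι}
    {M u : ℝ} (hζ : ∑ i, ζ i ^ 2 = 1) (hM : M ^ 2 ≤ u ^ 2 * (∑ i, ζ i ^ 4) ^ 3)
    (hsmall : ∀ j, j ≠ l → (∑ i, ζ i ^ 4) * |ζ j| ≤ 2 * M) :
    (1 - 4 * u ^ 2) * ∑ i, ζ i ^ 4 ≤ ζ l ^ 4 := by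
  have h := sum_sq_mul_le_of_forall_ne (sum_pow_four_pos_of_sum_sq_eq_one hζ) hM hsmall
    (fun j => sq_nonneg (ζ j)) hζ.le
  simp only [← pow_add, Nat.reduceAdd] at h
  linarith

lemma sq_le_inv_sq_mul_pow_three_of_mul_le_rpow {S M c : ℝ} (hS : 0 ≤ S) (hM : 0 ≤ M)
    (hc : 0 < c) (h : c * M ≤ S ^ ((3 : ℝ) / 2)) : M ^ 2 ≤ c⁻¹ ^ 2 * S ^ 3 := by
  have hS3 : (S ^ ((3 : ℝ) / 2)) ^ 2 = S ^ 3 := by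
    rw [← Real.rpow_natCast, ← Real.rpow_mul hS]
    norm_num
  have hsq : (c * M) ^ 2 ≤ S ^ 3 := hS3 ▸ pow_le_pow_left₀ (by positivity) h 2
  calc M ^ 2 = c⁻¹ ^ 2 * (c * M) ^ 2 := by field_simp
    _ ≤ c⁻¹ ^ 2 * S ^ 3 := by gcongr

lemma abs_mul_sq_sub_le_of_spike {S M u z a R : ℝ} (hS : 0 < S) (hu0 : 0 ≤ u) (hu : u ≤ 1 / 10)
    (hM : M ^ 2 ≤ u ^ 2 * S ^ 3) (hz : z ^ 2 ≤ 1) (hspike : (1 - 4 * u ^ 2) * S ≤ z ^ 4)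
    (hR : |R| ≤ M) (hrow : a * z ^ 3 + R = S * z) : |a * z ^ 2 - S| ≤ 2 * u * S := by
  have hu2 : 4 * u ^ 2 ≤ 1 / 25 := by nlinarith
  have hz4 : z ^ 4 ≤ z ^ 2 := by nlinarith [sq_nonneg z]
  have hSz : S ≤ 4 * z ^ 2 := by nlinarith
  have hz2 : 0 < z ^ 2 := by linarith
  have hMz : M * |z| ≤ 2 * u * S * z ^ 2 := by
    have hsq : (M * |z|) ^ 2 ≤ (2 * u * S * z ^ 2) ^ 2 := by
      rw [mul_pow, sq_abs]
      nlinarith [mul_le_mul_of_nonneg_right hM hz2.le, mul_le_mul_of_nonneg_left hSz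
        (by positivity : 0 ≤ u ^ 2 * S ^ 2 * z ^ 2)]
    exact (pow_le_pow_iff_left₀ (mul_nonneg ((abs_nonneg R).trans hR) (abs_nonneg z))
      (by positivity) two_ne_zero).1 hsq
  have hRz : |R * z| ≤ 2 * u * S * z ^ 2 :=
    (abs_mul R z).trans_le ((mul_le_mul_of_nonneg_right hR (abs_nonneg z)).trans hMz)
  have hkey : |a * z ^ 2 - S| * z ^ 2 = |R * z| := by
    rw [← abs_of_pos hz2, ← abs_mul, abs_of_pos hz2, ← abs_neg (R * z)]
    congr 1
    linear_combination z * hrow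
  nlinarith

lemma one_sub_two_mul_le_abs_div_sqrt_of_spike {S u z a : ℝ} (hS : 0 < S) (hu0 : 0 ≤ u)
    (hu : u ≤ 1 / 10) (hspike : (1 - 4 * u ^ 2) * S ≤ z ^ 4) (hcol : |a * z ^ 2 - S| ≤ 2 * u * S) :
    1 - 2 * u ≤ |z| / √a := by
  obtain ⟨hlow, hup⟩ := abs_le.1 hcol
  have hz2 : 0 < z ^ 2 := by nlinarith [sq_nonneg z]
  have ha : 0 < a := pos_of_mul_pos_left (by nlinarith) hz2.le
  have halign : (1 - 2 * u) * a ≤ z ^ 2 := by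
    have : (1 - 2 * u) * a * z ^ 2 ≤ z ^ 2 * z ^ 2 := by nlinarith
    exact le_of_mul_le_mul_right (by linarith) hz2
  rw [le_div_iff₀ (Real.sqrt_pos.2 ha), ← Real.sqrt_sq_eq_abs]
  apply Real.le_sqrt_of_sq_le
  rw [mul_pow, Real.sq_sqrt ha.le]
  nlinarith

lemma sq_mul_sq_le_of_spike {S u z a w : ℝ} (hspike : (1 - 4 * u ^ 2) * S ≤ z ^ 4)
    (hcol : |a * z ^ 2 - S| ≤ 2 * u * S) (hbessel : w ^ 2 + z ^ 2 ≤ a) :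
    z ^ 2 * w ^ 2 ≤ (2 * u + 4 * u ^ 2) * S := by
  nlinarith [(abs_le.1 hcol).2, mul_le_mul_of_nonneg_left hbessel (sq_nonneg z)]

theorem single_spike_stationary_is_local_min_general
    {k n : ℕ}
    (A : Matrix (Fin k) (Fin n) ℝ) (q : Fin k → ℝ) (μ κ Cstar : ℝ) (l : Fin n)
    (horth : A * Aᵀ = 1)
    (hμ : IsGreatest {x : ℝ | ∃ i j : Fin n, i ≠ j ∧
            x = |∑ r, A r i * A r j|} μ)
    (hκ : 1 ≤ κ) (hC : 10 ≤ Cstar)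
    (hq_unit : ∑ r, (q r) ^ 2 = 1)
    (hstat : A.mulVec (fun i => ((Aᵀ.mulVec q) i) ^ 3)
              = (∑ i, ((Aᵀ.mulVec q) i) ^ 4) • q)
    (hregion : (∑ i, ((Aᵀ.mulVec q) i) ^ 4) ^ ((3 : ℝ) / 2)
              ≥ Cstar * μ * κ ^ 2 * ∑ i, |(Aᵀ.mulVec q) i| ^ 3)
    (huniq : ∀ j : Fin n,
        |(Aᵀ.mulVec q) j|
            ≥ 2 * μ * (∑ i, |(Aᵀ.mulVec q) i| ^ 3) / (∑ i, ((Aᵀ.mulVec q) i) ^ 4)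
        → j = l) :
    |∑ r, q r * A r l| / Real.sqrt (∑ r, (A r l) ^ 2) ≥ 1 - 2 * (1 / Cstar) * κ⁻¹ ^ 2
    ∧ ∀ v : Fin k → ℝ, (∑ r, (v r) ^ 2 = 1) → (∑ r, v r * q r = 0) →
        v ⬝ᵥ ((-((1 - Matrix.vecMulVec q q) *
                ((3 : ℝ) • (A * Matrix.diagonal (fun i => ((Aᵀ.mulVec q) i) ^ 2) * Aᵀ)
                  - (∑ i, ((Aᵀ.mulVec q) i) ^ 4) • (1 : Matrix (Fin k) (Fin k) ℝ)) *
                (1 - Matrix.vecMulVec q q))).mulVec v)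
          ≥ (1 - 6 * (1 / Cstar) - 36 * (1 / Cstar) ^ 2 - 24 * (1 / Cstar) ^ 3)
              * (∑ i, ((Aᵀ.mulVec q) i) ^ 4)
        ∧ 0 < (1 - 6 * (1 / Cstar) - 36 * (1 / Cstar) ^ 2 - 24 * (1 / Cstar) ^ 3)
              * (∑ i, ((Aᵀ.mulVec q) i) ^ 4) := by
  set ζ := Aᵀ *ᵥ q
  set S := ∑ i, ζ i ^ 4
  set M := μ * ∑ i, |ζ i| ^ 3
  set c := 1 / Cstar
  set u := c * κ⁻¹ ^ 2
  have hζ1 : ∑ i, ζ i ^ 2 = 1 :=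
    (sum_sq_transpose_mulVec_of_mul_transpose_eq_one horth q).trans hq_unit
  have hS : 0 < S := sum_pow_four_pos_of_sum_sq_eq_one hζ1
  have hμ0 : 0 ≤ μ := by
    obtain ⟨i, j, -, rfl⟩ := hμ.1
    positivity
  have hc : 0 ≤ c ∧ c ≤ 1 / 10 := ⟨by positivity, one_div_le_one_div_of_le (by norm_num) hC⟩
  have hu : 0 ≤ u ∧ u ≤ c := ⟨by positivity,
    mul_le_of_le_one_right hc.1 (pow_le_one₀ (by positivity) (inv_le_one_of_one_le₀ hκ))⟩
  have hM : M ^ 2 ≤ u ^ 2 * S ^ 3 := by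
    have h := sq_le_inv_sq_mul_pow_three_of_mul_le_rpow (M := M) hS.le (by positivity)
      (by positivity : 0 < Cstar * κ ^ 2) (by simp only [M]; linarith [hregion])
    convert h using 3
    simp only [u, c, mul_inv, inv_pow, one_div]
  have hsmall : ∀ j, j ≠ l → S * |ζ j| ≤ 2 * M := by
    intro j hj
    have h := mt (huniq j) hj
    rw [not_le, lt_div_iff₀ hS] at h
    linarith
  have hspike : (1 - 4 * u ^ 2) * S ≤ ζ l ^ 4 := mul_sum_pow_four_le_pow_four_of_forall_ne hζ1 hM hsmall
  obtain ⟨R, hR, hrow⟩ := exists_transpose_mulVec_mulVec_apply_eq hμ0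
    (fun i j h => hμ.2 ⟨i, j, h, rfl⟩) (fun i => ζ i ^ 3) l
  rw [hstat, mulVec_smul] at hrow
  simp only [abs_pow] at hR
  have hcol := abs_mul_sq_sub_le_of_spike hS hu.1 (hu.2.trans hc.2) hM
    (hζ1 ▸ single_le_sum (fun i _ => sq_nonneg (ζ i)) (mem_univ l)) hspike hR hrow.symm
  refine ⟨?_, fun v hv hvq => ?_⟩
  · have hz : ∑ r, q r * A r l = ζ l := sum_congr rfl fun r _ => mul_comm _ _
    rw [hz, ge_iff_le, show 1 - 2 * c * κ⁻¹ ^ 2 = 1 - 2 * u by ring]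
    exact one_sub_two_mul_le_abs_div_sqrt_of_spike hS hu.1 (hu.2.trans hc.2) hspike hcol
  · rw [hessian_quadratic_form _ _ _ hvq, hv, mul_one]
    have hw1 := (sum_sq_transpose_mulVec_of_mul_transpose_eq_one horth v).trans hv
    have hQ := sum_sq_mul_le_of_forall_ne hS hM hsmall (w := fun i => (Aᵀ *ᵥ v) i ^ 2)
      (fun j => sq_nonneg _) hw1.le
    have hw := sq_mul_sq_le_of_spike (w := (Aᵀ *ᵥ v) l) hspike hcol
      (sq_sum_mul_add_sq_sum_mul_le (a := fun r => A r l) hq_unit hv hvq)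
    refine ⟨?_, mul_pos (by nlinarith [hc.1, hc.2]) hS⟩
    have hcoef : 1 - 6 * c - 36 * c ^ 2 - 24 * c ^ 3 ≤ 1 - 6 * u - 24 * u ^ 2 := by
      nlinarith [hu.1, hu.2, hc.1]
    beta_reduce at hQ ⊢
    linarith [mul_le_mul_of_nonneg_right hcoef hS.le]

/-- **Single-spike stationary points are local minima.**
Let `A ∈ ℝ^{k×n}` have orthonormal rows and nonzero columns, with coherence `μ`,
`κ ≥ 1`, `C⋆ ≥ 10`, `c⋆ = 1/C⋆`.  Let `q` be a unit-norm stationary point of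
`φ(q) = −(1/4)‖Aᵀq‖₄⁴` on the sphere with `‖ζ‖₄⁶ ≥ C⋆ μ κ² ‖ζ‖₃³`, `ζ = Aᵀq`, and
suppose exactly one index `l` satisfies `|ζ_l| ≥ 2μ‖ζ‖₃³/‖ζ‖₄⁴`.  Then
(i) `|⟨q, a_l⟩| / ‖a_l‖₂ ≥ 1 − 2 c⋆ κ⁻²`, and
(ii) for every unit vector `v ⊥ q`, `vᵀ (Hess φ(q)) v ≥ (1 − 6c⋆ − 36c⋆² − 24c⋆³)‖ζ‖₄⁴ > 0`,
where `Hess φ(q) = −P (3 A diag(ζ°²) Aᵀ − ‖ζ‖₄⁴ I) P`, `P = I − q qᵀ`. -/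
theorem single_spike_stationary_is_local_min
    {k n : ℕ}
    (A : Matrix (Fin k) (Fin n) ℝ) (q : Fin k → ℝ) (μ κ Cstar : ℝ) (l : Fin n)
    (horth : A * Aᵀ = 1)
    (hcols : ∀ i : Fin n, (fun r => A r i) ≠ 0)
    (hμ : IsGreatest {x : ℝ | ∃ i j : Fin n, i ≠ j ∧
            x = |∑ r, A r i * A r j|} μ)
    (hκ : 1 ≤ κ) (hC : 10 ≤ Cstar)
    (hq_unit : ∑ r, (q r) ^ 2 = 1)
    (hstat : A.mulVec (fun i => ((Aᵀ.mulVec q) i) ^ 3)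
              = (∑ i, ((Aᵀ.mulVec q) i) ^ 4) • q)
    (hregion : (∑ i, ((Aᵀ.mulVec q) i) ^ 4) ^ ((3 : ℝ) / 2)
              ≥ Cstar * μ * κ ^ 2 * ∑ i, |(Aᵀ.mulVec q) i| ^ 3)
    (hl : |(Aᵀ.mulVec q) l|
            ≥ 2 * μ * (∑ i, |(Aᵀ.mulVec q) i| ^ 3) / (∑ i, ((Aᵀ.mulVec q) i) ^ 4))
    (huniq : ∀ j : Fin n,
        |(Aᵀ.mulVec q) j|
            ≥ 2 * μ * (∑ i, |(Aᵀ.mulVec q) i| ^ 3) / (∑ i, ((Aᵀ.mulVec q) i) ^ 4)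
        → j = l) :
    |∑ r, q r * A r l| / Real.sqrt (∑ r, (A r l) ^ 2) ≥ 1 - 2 * (1 / Cstar) * κ⁻¹ ^ 2
    ∧ ∀ v : Fin k → ℝ, (∑ r, (v r) ^ 2 = 1) → (∑ r, v r * q r = 0) →
        v ⬝ᵥ ((-((1 - Matrix.vecMulVec q q) *
                ((3 : ℝ) • (A * Matrix.diagonal (fun i => ((Aᵀ.mulVec q) i) ^ 2) * Aᵀ)
                  - (∑ i, ((Aᵀ.mulVec q) i) ^ 4) • (1 : Matrix (Fin k) (Fin k) ℝ)) *
                (1 - Matrix.vecMulVec q q))).mulVec v)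
          ≥ (1 - 6 * (1 / Cstar) - 36 * (1 / Cstar) ^ 2 - 24 * (1 / Cstar) ^ 3)
              * (∑ i, ((Aᵀ.mulVec q) i) ^ 4)
        ∧ 0 < (1 - 6 * (1 / Cstar) - 36 * (1 / Cstar) ^ 2 - 24 * (1 / Cstar) ^ 3)
              * (∑ i, ((Aᵀ.mulVec q) i) ^ 4) :=
  single_spike_stationary_is_local_min_general A q μ κ Cstar l horth hμ hκ hC hq_unit hstat hregion
    huniq
end

section
/- Let a and b be two nonzero vectors in ℝ^k with inner product μ_{ab} = ⟨a, b⟩. Then for every unit vector v in span{a, b}: ⟨a/‖a‖₂, v⟩² + ⟨b/‖b‖₂, v⟩² ≥ 1 − |μ_{ab}|/(‖a‖₂‖b‖₂). -/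
open Finset

private lemma key_cross (p q μ : ℝ) (hμ : |μ| ≤ 1) (hu : p^2 + 2*p*q*μ + q^2 = 1) :
    (p + q*μ)^2 + (p*μ + q)^2 ≥ 1 - |μ| := by
  rcases abs_cases μ with ⟨h1,h2⟩|⟨h1,h2⟩ <;> rw [h1] at hμ ⊢
  · nlinarith [mul_nonneg h2 (sq_nonneg (p+q)), mul_nonneg h2 (sq_nonneg (p-q)),
      mul_nonneg (mul_nonneg h2 (by linarith : (0:ℝ) ≤ 1+μ)) (sq_nonneg (p+q)),
      mul_nonneg (mul_nonneg h2 (by linarith : (0:ℝ) ≤ 1-μ)) (sq_nonneg (p+q)),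
      sq_nonneg (p+q), sq_nonneg (p-q)]
  · nlinarith [mul_nonneg (neg_nonneg.2 h2.le) (sq_nonneg (p-q)),
      mul_nonneg (mul_nonneg (neg_nonneg.2 h2.le) (by linarith : (0:ℝ) ≤ 1+μ)) (sq_nonneg (p-q)),
      mul_nonneg (mul_nonneg (neg_nonneg.2 h2.le) (by linarith : (0:ℝ) ≤ 1-μ)) (sq_nonneg (p-q)),
      sq_nonneg (p+q), sq_nonneg (p-q)]

/-- **Lemma (cross term).** Let `a` and `b` be two nonzero vectors in `ℝ^k` with inner
product `μ_ab = ⟨a, b⟩`.  Then for every unit vector `v` in `span {a, b}`,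
`⟨a/‖a‖₂, v⟩² + ⟨b/‖b‖₂, v⟩² ≥ 1 − |μ_ab| / (‖a‖₂ ‖b‖₂)`. -/
theorem cross_term_lower_bound {k : ℕ} (a b v : Fin k → ℝ)
    (ha : a ≠ 0) (hb : b ≠ 0)
    (hv_unit : ∑ i, (v i) ^ 2 = 1)
    (hv_span : ∃ s t : ℝ, v = s • a + t • b) :
    ((∑ i, a i * v i) / Real.sqrt (∑ i, (a i) ^ 2)) ^ 2 +
      ((∑ i, b i * v i) / Real.sqrt (∑ i, (b i) ^ 2)) ^ 2 ≥
    1 - |∑ i, a i * b i| /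
      (Real.sqrt (∑ i, (a i) ^ 2) * Real.sqrt (∑ i, (b i) ^ 2)) := by
  obtain ⟨s, t, hv⟩ := hv_span
  set A := ∑ i, (a i)^2 with hAdef
  set B := ∑ i, (b i)^2 with hBdef
  set C := ∑ i, a i * b i with hCdef
  have hApos : 0 < A := by
    obtain ⟨i, hi⟩ := Function.ne_iff.mp ha
    exact Finset.sum_pos' (fun j _ => sq_nonneg _)
      ⟨i, Finset.mem_univ i, lt_of_le_of_ne (sq_nonneg _) (Ne.symm (pow_ne_zero 2 hi))⟩
  have hBpos : 0 < B := by
    obtain ⟨i, hi⟩ := Function.ne_iff.mp hb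
    exact Finset.sum_pos' (fun j _ => sq_nonneg _)
      ⟨i, Finset.mem_univ i, lt_of_le_of_ne (sq_nonneg _) (Ne.symm (pow_ne_zero 2 hi))⟩
  have hCS : C^2 ≤ A * B := by
    have := Finset.sum_mul_sq_le_sq_mul_sq Finset.univ a b
    simpa [hAdef, hBdef, hCdef] using this
  have hAV : ∑ i, a i * v i = s * A + t * C := by
    subst hv
    simp only [Pi.add_apply, Pi.smul_apply, smul_eq_mul, hAdef, hCdef,
      Finset.mul_sum]
    rw [← Finset.sum_add_distrib]
    exact Finset.sum_congr rfl (fun i _ => by ring)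
  have hBV : ∑ i, b i * v i = s * C + t * B := by
    subst hv
    simp only [Pi.add_apply, Pi.smul_apply, smul_eq_mul, hBdef, hCdef,
      Finset.mul_sum]
    rw [← Finset.sum_add_distrib]
    exact Finset.sum_congr rfl (fun i _ => by ring)
  have hUnit : s^2 * A + 2*s*t*C + t^2 * B = 1 := by
    rw [← hv_unit]
    subst hv
    simp only [Pi.add_apply, Pi.smul_apply, smul_eq_mul, hAdef, hBdef, hCdef,
      Finset.mul_sum]
    rw [← Finset.sum_add_distrib, ← Finset.sum_add_distrib]
    exact Finset.sum_congr rfl (fun i _ => by ring)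
  set sa := Real.sqrt A with hsadef
  set sb := Real.sqrt B with hsbdef
  have hsa : sa^2 = A := Real.sq_sqrt hApos.le
  have hsb : sb^2 = B := Real.sq_sqrt hBpos.le
  have hsapos : 0 < sa := Real.sqrt_pos.mpr hApos
  have hsbpos : 0 < sb := Real.sqrt_pos.mpr hBpos
  set p := s * sa with hpdef
  set q := t * sb with hqdef
  set μ := C / (sa * sb) with hmudef
  have hsane : sa ≠ 0 := hsapos.ne'
  have hsbne : sb ≠ 0 := hsbpos.ne'
  have e1 : (∑ i, a i * v i) / sa = p + q * μ := by
    rw [hAV, hpdef, hqdef, hmudef, ← hsa]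
    field_simp
  have e2 : (∑ i, b i * v i) / sb = p * μ + q := by
    rw [hBV, hpdef, hqdef, hmudef, ← hsb]
    field_simp
  have e3 : |C| / (sa * sb) = |μ| := by
    rw [hmudef, abs_div, abs_of_pos (mul_pos hsapos hsbpos)]
  have hμ : |μ| ≤ 1 := by
    rw [hmudef, abs_div, abs_of_pos (mul_pos hsapos hsbpos),
      div_le_one (mul_pos hsapos hsbpos)]
    have h1 : |C| = Real.sqrt (C^2) := (Real.sqrt_sq_eq_abs C).symm
    have h2 : sa * sb = Real.sqrt (A * B) := (Real.sqrt_mul hApos.le B).symm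
    rw [h1, h2]
    exact Real.sqrt_le_sqrt hCS
  have hu : p^2 + 2*p*q*μ + q^2 = 1 := by
    rw [← hUnit, hpdef, hqdef, hmudef, ← hsa, ← hsb]
    field_simp
  rw [e1, e2, e3]
  exact key_cross p q μ hμ hu
end
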